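/- For smooth functions f_{i,j} : [0,1]² → ℝ (1 ≤ i ≤ k₁, 1 ≤ j ≤ k₂), the 2-dimensional iterated integral over the square, defined as ∫_{0<t₁¹<⋯<t₁^{k₁}<1} ∫_{0<t₂¹<⋯<t₂^{k₂}<1} Π f_{i,j}(t₁^{a(i,j)}, t₂^{b(i,j)}) (with each variable occurring exactly once among the differentials), satisfies the two-directional shuffle relation: the product of two such integrals with parameters (k₁',k₂') and (k₁'',k₂'') equals the sum over pairs (ρ₁,ρ₂) ∈ Sh(k₁',k₁'') × Sh(k₂',k₂'') of the shuffled iterated integrals with parameters (k₁'+k₁'', k₂'+k₂''). -/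

import Mathlib

open MeasureTheory

/-- The open ordered simplex `{0 < t₁ < ⋯ < t_k < 1}` in `ℝᵏ`. -/
def simplex (k : ℕ) : Set (Fin k → ℝ) :=
  {t | (∀ i, t i ∈ Set.Ioo (0 : ℝ) 1) ∧ StrictMono t}

/-- An `(m',m'')`-shuffle. -/
def IsShuffle (m' m'' : ℕ) (ρ : Equiv.Perm (Fin (m' + m''))) : Prop :=
  (∀ i j : Fin m', i < j → ρ (Fin.castAdd m'' i) < ρ (Fin.castAdd m'' j)) ∧
  (∀ i j : Fin m'', i < j → ρ (Fin.natAdd m' i) < ρ (Fin.natAdd m' j))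

instance (m' m'' : ℕ) : DecidablePred (IsShuffle m' m'') := fun ρ => by
  unfold IsShuffle; infer_instance

/-- The 2-dimensional iterated integral over the square: the integral over the product
of ordered simplices `Δ_{k₁} × Δ_{k₂}` of the grid product `∏_{i,j} f_{i,j}(t₁ⁱ, t₂ʲ)`. -/
noncomputable def iint2 (k₁ k₂ : ℕ) (f : Fin k₁ → Fin k₂ → ℝ → ℝ → ℝ) : ℝ :=
  ∫ p in (simplex k₁) ×ˢ (simplex k₂), ∏ i, ∏ j, f i j (p.1 i) (p.2 j)

/-- The combination of two grids of integrands into one `(k₁'+k₁'') × (k₂'+k₂'')` grid: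
`f'` on the initial block, `f''` on the final block, and the constant `1` elsewhere. -/
def combineGrid (k₁' k₂' k₁'' k₂'' : ℕ)
    (f' : Fin k₁' → Fin k₂' → ℝ → ℝ → ℝ) (f'' : Fin k₁'' → Fin k₂'' → ℝ → ℝ → ℝ) :
    Fin (k₁' + k₁'') → Fin (k₂' + k₂'') → ℝ → ℝ → ℝ :=
  fun i j =>
    Fin.addCases (motive := fun _ => ℝ → ℝ → ℝ)
      (fun i' =>
        Fin.addCases (motive := fun _ => ℝ → ℝ → ℝ)
          (fun j' => f' i' j') (fun _ _ _ => 1) j)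
      (fun i'' =>
        Fin.addCases (motive := fun _ => ℝ → ℝ → ℝ)
          (fun _ _ _ => 1) (fun j'' => f'' i'' j'') j) i

/-! ### Auxiliary material -/

namespace MembraneAux

/-- The splitting equivalence `ℝ^{a+b} ≃ ℝ^a × ℝ^b`. -/
noncomputable def splitE (a b : ℕ) : (Fin (a + b) → ℝ) ≃ᵐ (Fin a → ℝ) × (Fin b → ℝ) :=
  (MeasurableEquiv.piCongrLeft (fun _ => ℝ) finSumFinEquiv).symm.trans
    (MeasurableEquiv.sumPiEquivProdPi fun _ => ℝ)

lemma splitE_apply (a b : ℕ) (t : Fin (a + b) → ℝ) :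
    splitE a b t = (fun i => t (Fin.castAdd b i), fun i => t (Fin.natAdd a i)) := rfl

lemma splitE_mp (a b : ℕ) : MeasurePreserving (splitE a b) volume volume :=
  ((volume_measurePreserving_piCongrLeft (fun _ => ℝ) finSumFinEquiv).symm _).trans
    (volume_measurePreserving_sumPiEquivProdPi fun _ => ℝ)

/-- The coordinate-permutation equivalence `t ↦ t ∘ ρ.symm`. -/
noncomputable def permT (m : ℕ) (ρ : Equiv.Perm (Fin m)) : (Fin m → ℝ) ≃ᵐ (Fin m → ℝ) :=
  (MeasurableEquiv.piCongrLeft (fun _ => ℝ) ρ.symm).symm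

lemma permT_apply (m : ℕ) (ρ : Equiv.Perm (Fin m)) (t : Fin m → ℝ) :
    permT m ρ t = t ∘ ρ.symm := rfl

lemma permT_mp (m : ℕ) (ρ : Equiv.Perm (Fin m)) : MeasurePreserving (permT m ρ) volume volume :=
  (volume_measurePreserving_piCongrLeft (fun _ => ℝ) ρ.symm).symm _

/-- The set corresponding to the shuffle `ρ`: those `t` with `t ∘ ρ.symm` in the simplex. -/
def shufSet (m : ℕ) (ρ : Equiv.Perm (Fin m)) : Set (Fin m → ℝ) :=
  permT m ρ ⁻¹' simplex m

/-- The "membrane" set: both halves of `t` lie in the respective simplices. -/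
def Sset (a b : ℕ) : Set (Fin (a + b) → ℝ) :=
  splitE a b ⁻¹' (simplex a ×ˢ simplex b)

lemma measurableSet_simplex (k : ℕ) : MeasurableSet (simplex k) := by
  have : simplex k = ({t | ∀ i, t i ∈ Set.Ioo (0:ℝ) 1} ∩
      ⋂ (i : Fin k), ⋂ (j : Fin k), {t | i < j → t i < t j}) := by
    ext t
    simp only [simplex, Set.mem_inter_iff, Set.mem_setOf_eq, Set.mem_iInter, StrictMono]
  rw [this]
  apply MeasurableSet.inter
  · have : {t : Fin k → ℝ | ∀ i, t i ∈ Set.Ioo (0:ℝ) 1} =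
        ⋂ i : Fin k, {t | t i ∈ Set.Ioo (0:ℝ) 1} := by ext t; simp
    rw [this]
    exact MeasurableSet.iInter fun i =>
      (measurable_pi_apply i) measurableSet_Ioo
  · refine MeasurableSet.iInter fun i => MeasurableSet.iInter fun j => ?_
    by_cases h : i < j
    · have : {t : Fin k → ℝ | i < j → t i < t j} = {t | t i < t j} := by
        ext t; simp [h]
      rw [this]
      exact measurableSet_lt (measurable_pi_apply i) (measurable_pi_apply j)
    · have : {t : Fin k → ℝ | i < j → t i < t j} = Set.univ := by
        ext t; simp [h]
      rw [this]; exact MeasurableSet.univ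

lemma measurableSet_Sset (a b : ℕ) : MeasurableSet (Sset a b) :=
  (splitE a b).measurable
    ((measurableSet_simplex a).prod (measurableSet_simplex b))

lemma measurableSet_shufSet (m : ℕ) (ρ : Equiv.Perm (Fin m)) :
    MeasurableSet (shufSet m ρ) :=
  (permT m ρ).measurable (measurableSet_simplex m)

/-- The unit box. -/
def box (m : ℕ) : Set (Fin m → ℝ) := Set.univ.pi fun _ => Set.Icc (0:ℝ) 1

lemma isCompact_box (m : ℕ) : IsCompact (box m) :=
  isCompact_univ_pi fun _ => isCompact_Icc

lemma shufSet_subset_box (m : ℕ) (ρ : Equiv.Perm (Fin m)) : shufSet m ρ ⊆ box m := by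
  intro t ht
  intro i _
  have := ht.1 (ρ i)
  have heq : (permT m ρ t) (ρ i) = t i := by
    simp [permT_apply]
  rw [heq] at this
  exact ⟨this.1.le, this.2.le⟩

lemma simplex_subset_box (m : ℕ) : simplex m ⊆ box m := by
  intro t ht i _
  exact ⟨(ht.1 i).1.le, (ht.1 i).2.le⟩

lemma Sset_subset_box (a b : ℕ) : Sset a b ⊆ box (a + b) := by
  intro t ht i _
  obtain ⟨h1, h2⟩ := ht
  rcases i with _
  refine Fin.addCases (fun i' => ?_) (fun i'' => ?_) i
  · exact ⟨(h1.1 i').1.le, (h1.1 i').2.le⟩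
  · exact ⟨(h2.1 i'').1.le, (h2.1 i'').2.le⟩

/-- The null set of non-injective tuples. -/
def badSet (m : ℕ) : Set (Fin m → ℝ) :=
  ⋃ (p : Fin m × Fin m) (_ : p.1 ≠ p.2), {t | t p.1 = t p.2}

lemma measurableSet_badSet (m : ℕ) : MeasurableSet (badSet m) := by
  refine MeasurableSet.iUnion fun p => MeasurableSet.iUnion fun _ => ?_
  exact measurableSet_eq_fun (measurable_pi_apply p.1) (measurable_pi_apply p.2)

lemma badSet_null (m : ℕ) : volume (badSet m) = 0 := by
  refine measure_iUnion_null fun p => measure_iUnion_null fun hp => ?_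
  set L : (Fin m → ℝ) →ₗ[ℝ] ℝ := (LinearMap.proj p.1 : (Fin m → ℝ) →ₗ[ℝ] ℝ) - (LinearMap.proj p.2 : (Fin m → ℝ) →ₗ[ℝ] ℝ) with hL
  have hset : {t : Fin m → ℝ | t p.1 = t p.2} = (LinearMap.ker L : Set (Fin m → ℝ)) := by
    ext t
    simp [hL, LinearMap.mem_ker, sub_eq_zero]
  rw [hset]
  apply Measure.addHaar_submodule
  intro htop
  have : (Pi.single p.1 (1:ℝ)) ∈ LinearMap.ker L := htop ▸ Submodule.mem_top
  rw [LinearMap.mem_ker] at this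
  simp [hL, Pi.single_eq_same, Pi.single_eq_of_ne (Ne.symm hp)] at this

lemma not_mem_badSet_iff (m : ℕ) (t : Fin m → ℝ) :
    t ∉ badSet m ↔ Function.Injective t := by
  simp only [badSet, Set.mem_iUnion, Set.mem_setOf_eq, not_exists]
  constructor
  · intro h x y hxy
    by_contra hne
    exact h (x, y) hne hxy
  · intro h p hp hval
    exact hp (h hval)

/-- A shuffle's set is contained in the membrane set. -/
lemma shufSet_subset_Sset (a b : ℕ) (ρ : Equiv.Perm (Fin (a + b)))
    (hρ : IsShuffle a b ρ) : shufSet (a + b) ρ ⊆ Sset a b := by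
  intro t ht
  have hu : (fun j => t (ρ.symm j)) ∈ simplex (a + b) := ht
  have htu : ∀ i, t i = (fun j => t (ρ.symm j)) (ρ i) := fun i => by simp
  constructor
  · refine ⟨fun i => ?_, fun i j hij => ?_⟩
    · rw [splitE_apply]
      simp only
      rw [htu (Fin.castAdd b i)]
      exact hu.1 _
    · show t (Fin.castAdd b i) < t (Fin.castAdd b j)
      rw [htu (Fin.castAdd b i), htu (Fin.castAdd b j)]
      exact hu.2 (hρ.1 i j hij)
  · refine ⟨fun i => ?_, fun i j hij => ?_⟩
    · rw [splitE_apply]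
      simp only
      rw [htu (Fin.natAdd a i)]
      exact hu.1 _
    · show t (Fin.natAdd a i) < t (Fin.natAdd a j)
      rw [htu (Fin.natAdd a i), htu (Fin.natAdd a j)]
      exact hu.2 (hρ.2 i j hij)

/-- Covering: an injective membrane point lies in some shuffle set. -/
lemma exists_shuffle (a b : ℕ) (t : Fin (a + b) → ℝ) (ht : t ∈ Sset a b)
    (hinj : Function.Injective t) :
    ∃ ρ, IsShuffle a b ρ ∧ t ∈ shufSet (a + b) ρ := by
  set σ := Tuple.sort t with hσ
  have hmono : Monotone (t ∘ σ) := Tuple.monotone_sort t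
  have huinj : Function.Injective (t ∘ σ) := hinj.comp σ.injective
  have hsm : StrictMono (t ∘ σ) := hmono.strictMono_of_injective huinj
  have hIoo : ∀ i, t i ∈ Set.Ioo (0:ℝ) 1 := by
    intro i
    obtain ⟨h1, h2⟩ := ht
    refine Fin.addCases (fun i' => ?_) (fun i'' => ?_) i
    · exact h1.1 i'
    · exact h2.1 i''
  refine ⟨σ.symm, ⟨fun i j hij => ?_, fun i j hij => ?_⟩, ?_⟩
  · have h1 : t (Fin.castAdd b i) < t (Fin.castAdd b j) := ht.1.2 hij
    have e1 : (t ∘ σ) (σ.symm (Fin.castAdd b i)) = t (Fin.castAdd b i) := by simp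
    have e2 : (t ∘ σ) (σ.symm (Fin.castAdd b j)) = t (Fin.castAdd b j) := by simp
    rw [← e1, ← e2] at h1
    exact hsm.lt_iff_lt.mp h1
  · have h1 : t (Fin.natAdd a i) < t (Fin.natAdd a j) := ht.2.2 hij
    have e1 : (t ∘ σ) (σ.symm (Fin.natAdd a i)) = t (Fin.natAdd a i) := by simp
    have e2 : (t ∘ σ) (σ.symm (Fin.natAdd a j)) = t (Fin.natAdd a j) := by simp
    rw [← e1, ← e2] at h1
    exact hsm.lt_iff_lt.mp h1
  · show (fun j => t (σ.symm.symm j)) ∈ simplex (a + b)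
    refine ⟨fun i => ?_, ?_⟩
    · exact hIoo _
    · intro i j hij
      exact hsm hij

/-- Shuffle sets for distinct permutations are disjoint (no shuffle hypothesis needed for
injective points, but we only need it for arbitrary permutations whose sets intersect). -/
lemma shufSet_disjoint (m : ℕ) (ρ ρ' : Equiv.Perm (Fin m)) (hne : ρ ≠ ρ') :
    Disjoint (shufSet m ρ) (shufSet m ρ') := by
  rw [Set.disjoint_left]
  intro t ht ht'
  have hu : (fun j => t (ρ.symm j)) ∈ simplex m := ht
  have hu' : (fun j => t (ρ'.symm j)) ∈ simplex m := ht'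
  have hinj : Function.Injective t := by
    intro x y hxy
    have : (fun j => t (ρ.symm j)) (ρ x) = (fun j => t (ρ.symm j)) (ρ y) := by simpa using hxy
    have := hu.2.injective this
    exact ρ.injective this
  have hsort : ∀ τ : Equiv.Perm (Fin m), StrictMono (t ∘ τ) → τ = Tuple.sort t := by
    intro τ hτ
    rw [Tuple.eq_sort_iff]
    refine ⟨hτ.monotone, fun i j hij heq => ?_⟩
    exact absurd (τ.injective (hinj heq)) hij.ne
  have h1 : ρ.symm = Tuple.sort t := hsort ρ.symm hu.2
  have h2 : ρ'.symm = Tuple.sort t := hsort ρ'.symm hu'.2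
  exact hne (by rw [← Equiv.symm_symm ρ, ← Equiv.symm_symm ρ', h1, h2])

end MembraneAux

section Comm

variable {α β γ δ : Type*} [MeasurableSpace α] [MeasurableSpace β]
  [MeasurableSpace γ] [MeasurableSpace δ]

/-- The measurable equivalence `(α × β) × (γ × δ) ≃ (α × γ) × (β × δ)`. -/
def commE : ((α × β) × γ × δ) ≃ᵐ ((α × γ) × β × δ) where
  toEquiv := Equiv.prodProdProdComm α β γ δ
  measurable_toFun := by
    show Measurable fun p : (α × β) × γ × δ => ((p.1.1, p.2.1), (p.1.2, p.2.2))
    exact ((measurable_fst.comp measurable_fst).prodMk (measurable_fst.comp measurable_snd)).prodMk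
      ((measurable_snd.comp measurable_fst).prodMk (measurable_snd.comp measurable_snd))
  measurable_invFun := by
    show Measurable fun p : (α × γ) × β × δ => ((p.1.1, p.2.1), (p.1.2, p.2.2))
    exact ((measurable_fst.comp measurable_fst).prodMk (measurable_fst.comp measurable_snd)).prodMk
      ((measurable_snd.comp measurable_fst).prodMk (measurable_snd.comp measurable_snd))

lemma commE_mp (μa : Measure α) (μb : Measure β) (μc : Measure γ) (μd : Measure δ)
    [SigmaFinite μa] [SigmaFinite μb] [SigmaFinite μc] [SigmaFinite μd] :
    MeasurePreserving (commE : ((α × β) × γ × δ) ≃ᵐ ((α × γ) × β × δ))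
      ((μa.prod μb).prod (μc.prod μd)) ((μa.prod μc).prod (μb.prod μd)) := by
  have m1 := measurePreserving_prodAssoc μa μb (μc.prod μd)
  have m2 : MeasurePreserving (Prod.map (id : α → α) ⇑MeasurableEquiv.prodAssoc.symm)
      (μa.prod (μb.prod (μc.prod μd))) (μa.prod ((μb.prod μc).prod μd)) :=
    (MeasurePreserving.id μa).prod ((measurePreserving_prodAssoc μb μc μd).symm _)
  have m3 : MeasurePreserving (Prod.map (id : α → α) (Prod.map Prod.swap (id : δ → δ)))
      (μa.prod ((μb.prod μc).prod μd)) (μa.prod ((μc.prod μb).prod μd)) :=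
    (MeasurePreserving.id μa).prod ((Measure.measurePreserving_swap).prod (MeasurePreserving.id μd))
  have m4 : MeasurePreserving (Prod.map (id : α → α) ⇑MeasurableEquiv.prodAssoc)
      (μa.prod ((μc.prod μb).prod μd)) (μa.prod (μc.prod (μb.prod μd))) :=
    (MeasurePreserving.id μa).prod (measurePreserving_prodAssoc μc μb μd)
  have m5 := (measurePreserving_prodAssoc μa μc (μb.prod μd)).symm
    (MeasurableEquiv.prodAssoc : ((α × γ) × β × δ) ≃ᵐ (α × γ × β × δ))
  have : ⇑(commE : ((α × β) × γ × δ) ≃ᵐ ((α × γ) × β × δ)) =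
      (⇑MeasurableEquiv.prodAssoc.symm ∘ (Prod.map id ⇑MeasurableEquiv.prodAssoc) ∘
        (Prod.map id (Prod.map Prod.swap id)) ∘ (Prod.map id ⇑MeasurableEquiv.prodAssoc.symm) ∘
        ⇑MeasurableEquiv.prodAssoc) := rfl
  rw [this]
  exact m5.comp (m4.comp (m3.comp (m2.comp m1)))

end Comm

namespace MembraneAux

lemma decomp (a₁ b₁ a₂ b₂ : ℕ)
    (g : (Fin (a₁ + b₁) → ℝ) × (Fin (a₂ + b₂) → ℝ) → ℝ) (hg : Continuous g) :
    ∫ p in Sset a₁ b₁ ×ˢ Sset a₂ b₂, g p =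
      ∑ ρ₁ ∈ Finset.univ.filter (IsShuffle a₁ b₁),
        ∑ ρ₂ ∈ Finset.univ.filter (IsShuffle a₂ b₂),
          ∫ p in simplex (a₁ + b₁) ×ˢ simplex (a₂ + b₂), g (p.1 ∘ ρ₁, p.2 ∘ ρ₂) := by
  set B : Equiv.Perm (Fin (a₁ + b₁)) × Equiv.Perm (Fin (a₂ + b₂)) →
      Set ((Fin (a₁ + b₁) → ℝ) × (Fin (a₂ + b₂) → ℝ)) :=
    fun q => shufSet (a₁ + b₁) q.1 ×ˢ shufSet (a₂ + b₂) q.2 with hB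
  set P : Finset (Equiv.Perm (Fin (a₁ + b₁)) × Equiv.Perm (Fin (a₂ + b₂))) :=
    (Finset.univ.filter (IsShuffle a₁ b₁)) ×ˢ (Finset.univ.filter (IsShuffle a₂ b₂)) with hP
  have hintbox : IntegrableOn g (box (a₁ + b₁) ×ˢ box (a₂ + b₂)) volume :=
    hg.continuousOn.integrableOn_compact ((isCompact_box (a₁ + b₁)).prod (isCompact_box (a₂ + b₂)))
  -- step 1 : a.e. equality of the domain with the union of shuffle cells
  have hUsub : (⋃ q ∈ P, B q) ⊆ Sset a₁ b₁ ×ˢ Sset a₂ b₂ := by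
    intro p hp
    simp only [Set.mem_iUnion] at hp
    obtain ⟨q, hq, hmem⟩ := hp
    rw [hP, Finset.mem_product, Finset.mem_filter, Finset.mem_filter] at hq
    exact ⟨shufSet_subset_Sset a₁ b₁ q.1 hq.1.2 hmem.1,
      shufSet_subset_Sset a₂ b₂ q.2 hq.2.2 hmem.2⟩
  have haeeq : (Sset a₁ b₁ ×ˢ Sset a₂ b₂ : Set _) =ᵐ[volume] ⋃ q ∈ P, B q := by
    rw [MeasureTheory.ae_eq_set]
    constructor
    · -- difference is contained in the bad sets
      have hsub : (Sset a₁ b₁ ×ˢ Sset a₂ b₂) \ (⋃ q ∈ P, B q) ⊆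
          (badSet (a₁ + b₁) ×ˢ (Set.univ : Set (Fin (a₂ + b₂) → ℝ))) ∪
          ((Set.univ : Set (Fin (a₁ + b₁) → ℝ)) ×ˢ badSet (a₂ + b₂)) := by
        rintro ⟨t₁, t₂⟩ ⟨⟨h₁, h₂⟩, hnot⟩
        by_contra hcon
        simp only [Set.mem_union, Set.mem_prod, Set.mem_univ, and_true, true_and,
          not_or] at hcon
        obtain ⟨hb₁, hb₂⟩ := hcon
        obtain ⟨ρ₁, hs₁, hm₁⟩ := exists_shuffle a₁ b₁ t₁ h₁ ((not_mem_badSet_iff (a₁ + b₁) t₁).mp hb₁)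
        obtain ⟨ρ₂, hs₂, hm₂⟩ := exists_shuffle a₂ b₂ t₂ h₂ ((not_mem_badSet_iff (a₂ + b₂) t₂).mp hb₂)
        apply hnot
        simp only [Set.mem_iUnion]
        refine ⟨(ρ₁, ρ₂), ?_, ⟨hm₁, hm₂⟩⟩
        rw [hP, Finset.mem_product, Finset.mem_filter, Finset.mem_filter]
        exact ⟨⟨Finset.mem_univ _, hs₁⟩, ⟨Finset.mem_univ _, hs₂⟩⟩
      refine measure_mono_null hsub ?_
      refine measure_union_null ?_ ?_
      · rw [Measure.volume_eq_prod, Measure.prod_prod, badSet_null, zero_mul]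
      · rw [Measure.volume_eq_prod, Measure.prod_prod, badSet_null, mul_zero]
    · rw [Set.diff_eq_empty.mpr hUsub]
      exact measure_empty
  rw [setIntegral_congr_set haeeq]
  -- step 2 : split the integral over the disjoint union
  have hmeas : ∀ q ∈ P, MeasurableSet (B q) := fun q _ =>
    (measurableSet_shufSet (a₁ + b₁) q.1).prod (measurableSet_shufSet (a₂ + b₂) q.2)
  have hdisj : Set.Pairwise (↑P) (Function.onFun Disjoint B) := by
    intro q hq q' hq' hne
    by_cases h1 : q.1 = q'.1
    · have h2 : q.2 ≠ q'.2 := fun h2 => hne (Prod.ext h1 h2)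
      exact Set.Disjoint.set_prod_right (shufSet_disjoint (a₂ + b₂) q.2 q'.2 h2) _ _
    · exact Set.Disjoint.set_prod_left (shufSet_disjoint (a₁ + b₁) q.1 q'.1 h1) _ _
  have hint : ∀ q ∈ P, IntegrableOn g (B q) volume := fun q _ =>
    hintbox.mono_set (Set.prod_mono (shufSet_subset_box (a₁ + b₁) q.1) (shufSet_subset_box (a₂ + b₂) q.2))
  rw [integral_biUnion_finset P hmeas hdisj hint, hP, Finset.sum_product]
  -- step 3 : change of variables in each cell
  refine Finset.sum_congr rfl fun ρ₁ _ => Finset.sum_congr rfl fun ρ₂ _ => ?_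
  set F := (permT (a₁ + b₁) ρ₁).prodCongr (permT (a₂ + b₂) ρ₂) with hF
  have hFmp : MeasurePreserving (⇑F) volume volume := by
    rw [Measure.volume_eq_prod]
    exact (permT_mp (a₁ + b₁) ρ₁).prod (permT_mp (a₂ + b₂) ρ₂)
  have hBeq : B (ρ₁, ρ₂) = ⇑F ⁻¹' (simplex (a₁ + b₁) ×ˢ simplex (a₂ + b₂)) := rfl
  rw [hBeq]
  have key := hFmp.setIntegral_preimage_emb F.measurableEmbedding
    (fun q => g (q.1 ∘ ⇑ρ₁, q.2 ∘ ⇑ρ₂)) (simplex (a₁ + b₁) ×ˢ simplex (a₂ + b₂))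
  have hfix : ∀ x : (Fin (a₁ + b₁) → ℝ) × (Fin (a₂ + b₂) → ℝ),
      ((F x).1 ∘ ⇑ρ₁, (F x).2 ∘ ⇑ρ₂) = x := by
    intro x
    refine Prod.ext ?_ ?_
    · funext j; simp [hF, MeasurableEquiv.prodCongr, permT_apply]
    · funext j; simp [hF, MeasurableEquiv.prodCongr, permT_apply]
  simp only [hfix] at key
  exact key

end MembraneAux

open MembraneAux in
/-- Two-directional shuffle relation for 2-dimensional iterated integrals over membranes
(Theorem 3.1 for `n = 2`): the product of the integrals with parameters `(k₁',k₂')` and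
`(k₁'',k₂'')` is the sum over pairs of shuffles `(ρ₁,ρ₂) ∈ Sh(k₁',k₁'') × Sh(k₂',k₂'')`
of the shuffled iterated integrals with parameters `(k₁'+k₁'', k₂'+k₂'')`. -/
theorem membrane_shuffle_two (k₁' k₂' k₁'' k₂'' : ℕ)
    (f' : Fin k₁' → Fin k₂' → ℝ → ℝ → ℝ) (f'' : Fin k₁'' → Fin k₂'' → ℝ → ℝ → ℝ)
    (hf' : ∀ i j, Continuous fun p : ℝ × ℝ => f' i j p.1 p.2)
    (hf'' : ∀ i j, Continuous fun p : ℝ × ℝ => f'' i j p.1 p.2) :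
    iint2 k₁' k₂' f' * iint2 k₁'' k₂'' f'' =
      ∑ ρ₁ ∈ Finset.univ.filter (IsShuffle k₁' k₁''),
        ∑ ρ₂ ∈ Finset.univ.filter (IsShuffle k₂' k₂''),
          iint2 (k₁' + k₁'') (k₂' + k₂'')
            (fun i j => combineGrid k₁' k₂' k₁'' k₂'' f' f'' (ρ₁.symm i) (ρ₂.symm j)) := by
  classical
  set cg := combineGrid k₁' k₂' k₁'' k₂'' f' f'' with hcg
  have hcgc : ∀ i j, Continuous fun q : ℝ × ℝ => cg i j q.1 q.2 := by
    intro i j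
    refine Fin.addCases
      (motive := fun i => Continuous fun q : ℝ × ℝ => cg i j q.1 q.2)
      (fun i' => ?_) (fun i'' => ?_) i
    · refine Fin.addCases
        (motive := fun j => Continuous fun q : ℝ × ℝ => cg (Fin.castAdd k₁'' i') j q.1 q.2)
        (fun j' => ?_) (fun j'' => ?_) j
      · simpa [hcg, combineGrid] using hf' i' j'
      · simp only [hcg, combineGrid, Fin.addCases_left, Fin.addCases_right]
        exact continuous_const
    · refine Fin.addCases
        (motive := fun j => Continuous fun q : ℝ × ℝ => cg (Fin.natAdd k₁' i'') j q.1 q.2)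
        (fun j' => ?_) (fun j'' => ?_) j
      · simp only [hcg, combineGrid, Fin.addCases_left, Fin.addCases_right]
        exact continuous_const
      · simpa [hcg, combineGrid] using hf'' i'' j''
  set G : (Fin (k₁' + k₁'') → ℝ) × (Fin (k₂' + k₂'') → ℝ) → ℝ :=
    fun p => ∏ i, ∏ j, cg i j (p.1 i) (p.2 j) with hG
  have hGc : Continuous G := by
    rw [hG]
    apply continuous_finset_prod
    intro i _
    apply continuous_finset_prod
    intro j _
    have hc : Continuous fun p : (Fin (k₁' + k₁'') → ℝ) × (Fin (k₂' + k₂'') → ℝ) =>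
        (p.1 i, p.2 j) :=
      ((continuous_apply i).comp continuous_fst).prodMk
        ((continuous_apply j).comp continuous_snd)
    exact (hcgc i j).comp hc
  -- rewrite each summand of the RHS
  have hterm : ∀ (ρ₁ : Equiv.Perm (Fin (k₁' + k₁''))) (ρ₂ : Equiv.Perm (Fin (k₂' + k₂''))),
      iint2 (k₁' + k₁'') (k₂' + k₂'')
        (fun i j => cg (ρ₁.symm i) (ρ₂.symm j)) =
      ∫ p in simplex (k₁' + k₁'') ×ˢ simplex (k₂' + k₂''), G (p.1 ∘ ρ₁, p.2 ∘ ρ₂) := by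
    intro ρ₁ ρ₂
    rw [iint2]
    have : (fun p : (Fin (k₁' + k₁'') → ℝ) × (Fin (k₂' + k₂'') → ℝ) =>
        ∏ i, ∏ j, cg (ρ₁.symm i) (ρ₂.symm j) (p.1 i) (p.2 j)) =
        fun p => G (p.1 ∘ ρ₁, p.2 ∘ ρ₂) := by
      funext p
      show ∏ i, ∏ j, cg (ρ₁.symm i) (ρ₂.symm j) (p.1 i) (p.2 j)
        = ∏ i, ∏ j, cg i j ((p.1 ∘ ρ₁) i) ((p.2 ∘ ρ₂) j)
      rw [← Equiv.prod_comp ρ₁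
        (fun i => ∏ j, cg (ρ₁.symm i) (ρ₂.symm j) (p.1 i) (p.2 j))]
      refine Finset.prod_congr rfl fun i _ => ?_
      rw [← Equiv.prod_comp ρ₂
        (fun j => cg (ρ₁.symm (ρ₁ i)) (ρ₂.symm j) (p.1 (ρ₁ i)) (p.2 j))]
      simp [Equiv.symm_apply_apply]
    rw [this]
  have hsum : ∑ ρ₁ ∈ Finset.univ.filter (IsShuffle k₁' k₁''),
      ∑ ρ₂ ∈ Finset.univ.filter (IsShuffle k₂' k₂''),
        iint2 (k₁' + k₁'') (k₂' + k₂'')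
          (fun i j => cg (ρ₁.symm i) (ρ₂.symm j)) =
      ∫ p in Sset k₁' k₁'' ×ˢ Sset k₂' k₂'', G p := by
    rw [decomp k₁' k₁'' k₂' k₂'' G hGc]
    exact Finset.sum_congr rfl fun ρ₁ _ => Finset.sum_congr rfl fun ρ₂ _ => hterm ρ₁ ρ₂
  rw [hcg] at hsum
  rw [hsum]
  -- now transform the LHS
  set Φ := ((splitE k₁' k₁'').prodCongr (splitE k₂' k₂'')).trans commE with hΦ
  have hΦmp : MeasurePreserving (⇑Φ) volume volume := by
    have h1 : MeasurePreserving (⇑((splitE k₁' k₁'').prodCongr (splitE k₂' k₂''))) volume volume := by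
      rw [Measure.volume_eq_prod]
      exact (splitE_mp _ _).prod (splitE_mp _ _)
    have h2 : MeasurePreserving
        (⇑(commE : ((Fin k₁' → ℝ) × (Fin k₁'' → ℝ)) × (Fin k₂' → ℝ) × (Fin k₂'' → ℝ) ≃ᵐ
          ((Fin k₁' → ℝ) × (Fin k₂' → ℝ)) × (Fin k₁'' → ℝ) × (Fin k₂'' → ℝ)))
        volume volume := by
      simp only [Measure.volume_eq_prod]
      exact commE_mp volume volume volume volume
    exact h2.comp h1
  have hpre : ⇑Φ ⁻¹' ((simplex k₁' ×ˢ simplex k₂') ×ˢ (simplex k₁'' ×ˢ simplex k₂'')) =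
      Sset k₁' k₁'' ×ˢ Sset k₂' k₂'' := by
    ext p
    constructor
    · intro h
      exact ⟨⟨h.1.1, h.2.1⟩, ⟨h.1.2, h.2.2⟩⟩
    · intro h
      exact ⟨⟨h.1.1, h.2.1⟩, ⟨h.1.2, h.2.2⟩⟩
  have key := hΦmp.setIntegral_preimage_emb Φ.measurableEmbedding
    (fun q => (∏ i, ∏ j, f' i j (q.1.1 i) (q.1.2 j)) *
      ∏ i, ∏ j, f'' i j (q.2.1 i) (q.2.2 j))
    ((simplex k₁' ×ˢ simplex k₂') ×ˢ (simplex k₁'' ×ˢ simplex k₂''))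
  have hsplit : ∀ x : (Fin (k₁' + k₁'') → ℝ) × (Fin (k₂' + k₂'') → ℝ),
      (∏ i, ∏ j, f' i j ((Φ x).1.1 i) ((Φ x).1.2 j)) *
        (∏ i, ∏ j, f'' i j ((Φ x).2.1 i) ((Φ x).2.2 j)) = G x := by
    intro x
    show (∏ i, ∏ j, f' i j (x.1 (Fin.castAdd k₁'' i)) (x.2 (Fin.castAdd k₂'' j))) *
        (∏ i, ∏ j, f'' i j (x.1 (Fin.natAdd k₁' i)) (x.2 (Fin.natAdd k₂' j))) = G x
    rw [hG]
    simp only [hcg]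
    rw [Fin.prod_univ_add
      (f := fun i => ∏ j, combineGrid k₁' k₂' k₁'' k₂'' f' f'' i j (x.1 i) (x.2 j))]
    simp [Fin.prod_univ_add, combineGrid]
  simp only [hsplit] at key
  rw [hpre] at key
  rw [key]
  have hfin := setIntegral_prod_mul (μ := (volume : Measure ((Fin k₁' → ℝ) × (Fin k₂' → ℝ))))
    (ν := (volume : Measure ((Fin k₁'' → ℝ) × (Fin k₂'' → ℝ))))
    (fun p : (Fin k₁' → ℝ) × (Fin k₂' → ℝ) => ∏ i, ∏ j, f' i j (p.1 i) (p.2 j))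
    (fun p : (Fin k₁'' → ℝ) × (Fin k₂'' → ℝ) => ∏ i, ∏ j, f'' i j (p.1 i) (p.2 j))
    (simplex k₁' ×ˢ simplex k₂') (simplex k₁'' ×ˢ simplex k₂'')
  rw [← Measure.volume_eq_prod] at hfin
  rw [iint2, iint2]
  exact hfin.symm
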